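/- arXiv:1901.03266 — 4 statements merged into one kernel-verified Lean document; each statement's English description precedes it below -/
import Mathlib

section
/- For every bracket pattern w, the completion of the dual equals the completion: A(w†) = A(w). -/
/-- The frame of a bracket pattern: its maximum (sup). -/
def frame (w : Finset ℕ) : ℕ := w.sup id

/-- The dual of a bracket pattern: `w† = { ‖w‖ - i : i ∈ ℕ₀, i < ‖w‖, i ∉ w }`. -/
def dual (w : Finset ℕ) : Finset ℕ :=
  ((Finset.range (frame w)).filter (fun i => i ∉ w)).image (fun i => frame w - i)

/-- The completion of a bracket pattern: `A(w) = { j - i : j ∈ w, i ∈ ℕ₀, i ∉ w, i < j }`. -/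
def completion (w : Finset ℕ) : Finset ℕ :=
  w.biUnion (fun j => ((Finset.range j).filter (fun i => i ∉ w)).image (fun i => j - i))

/-- The `j`-projection of a bracket pattern: `∩_j w = { i ∈ w : i ≤ j }`. -/
def proj (j : ℕ) (w : Finset ℕ) : Finset ℕ := w.filter (fun i => i ≤ j)

/-- A bracket pattern is a nonempty finite subset of ℕ = {1,2,...}. -/
def IsBracketPattern (w : Finset ℕ) : Prop := w.Nonempty ∧ 0 ∉ w

lemma mem_dual (w : Finset ℕ) (k : ℕ) :
    k ∈ dual w ↔ 1 ≤ k ∧ k ≤ frame w ∧ frame w - k ∉ w := by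
  simp only [dual, Finset.mem_image, Finset.mem_filter, Finset.mem_range]
  constructor
  · rintro ⟨i, ⟨hi, hiw⟩, rfl⟩
    refine ⟨by omega, by omega, ?_⟩
    have : frame w - (frame w - i) = i := by omega
    rwa [this]
  · rintro ⟨h1, h2, h3⟩
    exact ⟨frame w - k, ⟨by omega, h3⟩, by omega⟩

lemma mem_completion (w : Finset ℕ) (d : ℕ) :
    d ∈ completion w ↔ ∃ j ∈ w, ∃ i, i < j ∧ i ∉ w ∧ j - i = d := by
  simp only [completion, Finset.mem_biUnion, Finset.mem_image, Finset.mem_filter,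
    Finset.mem_range]
  constructor
  · rintro ⟨j, hj, i, ⟨hi, hiw⟩, rfl⟩
    exact ⟨j, hj, i, hi, hiw, rfl⟩
  · rintro ⟨j, hj, i, hi, hiw, rfl⟩
    exact ⟨j, hj, i, ⟨hi, hiw⟩, rfl⟩

lemma le_frame {w : Finset ℕ} {a : ℕ} (ha : a ∈ w) : a ≤ frame w :=
  Finset.le_sup (f := id) ha

lemma frame_mem {w : Finset ℕ} (hw : w.Nonempty) : frame w ∈ w := by
  obtain ⟨b, hb, h⟩ := Finset.exists_mem_eq_sup w hw id
  rw [frame, h]; exact hb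

lemma frame_dual {w : Finset ℕ} (hw : IsBracketPattern w) : frame (dual w) = frame w := by
  obtain ⟨hne, h0⟩ := hw
  have h1 : 1 ≤ frame w := by
    obtain ⟨a, ha⟩ := hne
    have := le_frame ha
    have : a ≠ 0 := fun h => h0 (h ▸ ha)
    omega
  have hn : frame w ∈ dual w := by
    rw [mem_dual]
    exact ⟨h1, le_refl _, by simpa using h0⟩
  apply le_antisymm
  · apply Finset.sup_le
    intro k hk
    exact ((mem_dual w k).1 hk).2.1
  · exact le_frame hn

theorem completion_dual (w : Finset ℕ) (hw : IsBracketPattern w) :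
    completion (dual w) = completion w := by
  obtain ⟨hne, h0⟩ := hw
  set n := frame w with hn
  have hfd : frame (dual w) = n := frame_dual ⟨hne, h0⟩
  have h1 : 1 ≤ n := by
    obtain ⟨a, ha⟩ := hne
    have := le_frame ha
    have : a ≠ 0 := fun h => h0 (h ▸ ha)
    omega
  have hnw : n ∈ w := frame_mem hne
  have hmemd : ∀ k, k ∈ dual w ↔ 1 ≤ k ∧ k ≤ n ∧ n - k ∉ w := fun k => mem_dual w k
  ext d
  rw [mem_completion, mem_completion]
  constructor
  · rintro ⟨j', hj', i', hi', hi'd, rfl⟩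
    rw [hmemd] at hj'
    obtain ⟨hj1, hj2, hj3⟩ := hj'
    by_cases hi0 : i' = 0
    · -- d = j'; use j = n ∈ w, i = n - j' ∉ w
      subst hi0
      exact ⟨n, hnw, n - j', by omega, hj3, by omega⟩
    · -- i' ≥ 1, i' ∉ dual w means n - i' ∈ w
      have : n - i' ∈ w := by
        by_contra hc
        exact hi'd ((hmemd i').2 ⟨by omega, by omega, hc⟩)
      refine ⟨n - i', this, n - j', by omega, hj3, by omega⟩
  · rintro ⟨j, hj, i, hi, hiw, rfl⟩
    have hjn : j ≤ n := le_frame hj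
    -- j' = n - i ∈ dual w, i' = n - j ∉ dual w
    have hj' : n - i ∈ dual w := by
      rw [hmemd]
      refine ⟨by omega, by omega, ?_⟩
      have : n - (n - i) = i := by omega
      rwa [this]
    have hi' : n - j ∉ dual w := by
      rw [hmemd]
      push_neg
      intro h1' h2'
      have : n - (n - j) = j := by omega
      rw [this]; exact hj
    exact ⟨n - i, hj', n - j, by omega, hi', by omega⟩
end

section
/- For every bracket pattern w, the complement ℕ₀ \ A(w) of the completion of w is a submonoid of (ℕ₀, +): it contains 0, and is closed under addition. -/
theorem compl_completion_submonoid (w : Finset ℕ) (hw : IsBracketPattern w) :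
    (0 : ℕ) ∉ completion w ∧
      ∀ x y : ℕ, x ∉ completion w → y ∉ completion w → x + y ∉ completion w := by
  have hmem : ∀ x : ℕ, x ∈ completion w ↔
      ∃ j ∈ w, ∃ i, i < j ∧ i ∉ w ∧ j - i = x := by
    intro x
    simp [completion, Finset.mem_biUnion, Finset.mem_image, Finset.mem_filter,
      Finset.mem_range, and_assoc]
  constructor
  · intro h
    obtain ⟨j, hj, i, hij, _, hji⟩ := (hmem 0).1 h
    omega
  · intro x y hx hy h
    obtain ⟨j, hj, i, hij, hiw, hji⟩ := (hmem (x + y)).1 h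
    rcases Nat.eq_zero_or_pos x with rfl | hx0
    · exact hy ((hmem y).2 ⟨j, hj, i, hij, hiw, by omega⟩)
    rcases Nat.eq_zero_or_pos y with rfl | hy0
    · exact hx ((hmem x).2 ⟨j, hj, i, hij, hiw, by omega⟩)
    by_cases hix : i + x ∈ w
    · exact hx ((hmem x).2 ⟨i + x, hix, i, by omega, hiw, by omega⟩)
    · exact hy ((hmem y).2 ⟨j, hj, i + x, by omega, hix, by omega⟩)
end

section
/- For every submonoid M of (ℕ₀, +) whose complement ℕ₀ \ M is nonempty and finite, the set ℕ₀ \ M is a bracket pattern satisfying A(ℕ₀ \ M) = ℕ₀ \ M, i.e. it is a fixed point of the completion operation. -/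
theorem completion_of_gap_set (M : AddSubmonoid ℕ) (w : Finset ℕ)
    (hcompl : ∀ n : ℕ, n ∈ w ↔ n ∉ M) (hne : w.Nonempty) :
    IsBracketPattern w ∧ completion w = w := by
  have h0 : 0 ∉ w := fun h => (hcompl 0).mp h M.zero_mem
  refine ⟨⟨hne, h0⟩, ?_⟩
  ext n
  simp only [completion, Finset.mem_biUnion, Finset.mem_image, Finset.mem_filter,
    Finset.mem_range]
  constructor
  · rintro ⟨j, hj, i, ⟨hi_lt, hi⟩, rfl⟩
    rw [hcompl] at hj ⊢
    intro hmem
    have hiM : i ∈ M := by by_contra h; exact hi ((hcompl i).mpr h)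
    have := M.add_mem hiM hmem
    rw [Nat.add_sub_cancel' (le_of_lt hi_lt)] at this
    exact hj this
  · intro hn
    exact ⟨n, hn, 0, ⟨Nat.pos_of_ne_zero (fun h => h0 (h ▸ hn)), h0⟩, Nat.sub_zero n⟩
end

section
/- A bracket pattern w satisfies w = A(w) if and only if ℕ₀ \ w is a submonoid of (ℕ₀, +). (Equivalently, w equals its completion if and only if w is the gap set of a numerical semigroup.) -/
theorem completion_fixed_iff_gap_set (w : Finset ℕ) (hw : IsBracketPattern w) :
    completion w = w ↔ ∀ n m : ℕ, n ∉ w → m ∉ w → n + m ∉ w := by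
  obtain ⟨-, h0⟩ := hw
  constructor
  · intro hA n m hn hm hnm
    rcases Nat.eq_zero_or_pos m with rfl | hmpos
    · exact hn (by simpa using hnm)
    · apply hm
      rw [← hA]
      simp only [completion, Finset.mem_biUnion, Finset.mem_image, Finset.mem_filter,
        Finset.mem_range]
      exact ⟨n + m, hnm, n, ⟨by omega, hn⟩, by omega⟩
  · intro hgap
    ext x
    simp only [completion, Finset.mem_biUnion, Finset.mem_image, Finset.mem_filter,
      Finset.mem_range]
    constructor
    · rintro ⟨j, hj, i, ⟨hij, hi⟩, rfl⟩
      by_contra hx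
      exact (hgap i (j - i) hi hx) (by simpa [Nat.add_sub_cancel' hij.le] using hj)
    · intro hx
      refine ⟨x, hx, 0, ⟨?_, h0⟩, by omega⟩
      rcases Nat.eq_zero_or_pos x with rfl | h
      · exact absurd hx h0
      · exact h
end
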